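/- arXiv:1610.01110 — 5 statements merged into one kernel-verified Lean document; each statement's English description precedes it below -/
import Mathlib

section
/- Let G ≤ S_n be a permutation group, τ ∈ G an n-cycle, and N ⊴ G a normal subgroup with G = N⟨τ⟩, G/N abelian, and N ∩ ⟨τ⟩ = {1}. Then the conjugacy class of τ in G equals the full coset Nτ. -/
/-!
Since `G/N` is abelian, every conjugate `g τ g⁻¹ = ⁅g, τ⁆ τ` lies in `Nτ`. Conversely,
`y ↦ ⁅y, τ⁆` maps `N` into `N`, and `⁅a, τ⁆ = ⁅b, τ⁆` forces `b⁻¹ a` to commute with `τ`.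
The centralizer of an `n`-cycle is `⟨τ⟩`, which meets `N` trivially, so the map is
injective, hence surjective as `N` is finite: every `x τ` with `x ∈ N` is a conjugate `y τ y⁻¹`.
-/

open scoped commutatorElement

theorem Equiv.Perm.IsCycle.mem_zpowers_of_commute_of_support_eq_univ {α : Type*} [Fintype α]
    [DecidableEq α] {τ g : Equiv.Perm α} (hcyc : τ.IsCycle) (hsupp : τ.support = Finset.univ)
    (hcomm : Commute g τ) : g ∈ Subgroup.zpowers τ := by
  obtain ⟨_, hg_zpowers⟩ := hcyc.commute_iff.mp hcomm
  rwa [Equiv.Perm.ofSubtype_subtypePerm _ fun x _ ↦ hsupp ▸ Finset.mem_univ x] at hg_zpowers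

theorem Subgroup.injOn_commutatorElement_of_commute_eq_one {G : Type*} [Group G]
    {N : Subgroup G} {t : G} (hN : ∀ y ∈ N, Commute y t → y = 1) :
    Set.InjOn (fun y ↦ ⁅y, t⁆) (N : Set G) := by
  intro a ha b hb hab
  have hconj : a * t * a⁻¹ = b * t * b⁻¹ := by
    simpa only [commutatorElement_def, mul_left_inj] using hab
  have hcomm : Commute (b⁻¹ * a) t := by
    calc b⁻¹ * a * t = b⁻¹ * (a * t * a⁻¹) * a := by group
      _ = t * (b⁻¹ * a) := by rw [hconj]; group
  exact (inv_mul_eq_one.mp (hN _ (N.mul_mem (N.inv_mem hb) ha) hcomm)).symm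

theorem Subgroup.exists_mem_conj_eq_mul_of_commute_eq_one {G : Type*} [Group G]
    {N : Subgroup G} [Finite N] {t : G} (hcomm_mem : ∀ y ∈ N, ⁅y, t⁆ ∈ N)
    (hN : ∀ y ∈ N, Commute y t → y = 1) {x : G} (hx : x ∈ N) :
    ∃ y ∈ N, y * t * y⁻¹ = x * t := by
  let f : N → N := fun y ↦ ⟨⁅(y : G), t⁆, hcomm_mem y y.2⟩
  have hf : Function.Injective f := fun a b hab ↦
    Subtype.ext <| injOn_commutatorElement_of_commute_eq_one hN a.2 b.2 (congrArg Subtype.val hab)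
  obtain ⟨y, hy⟩ := Finite.surjective_of_injective hf ⟨x, hx⟩
  refine ⟨y, y.2, ?_⟩
  rw [← show ⁅(y : G), t⁆ = x from congrArg Subtype.val hy, commutatorElement_def,
    inv_mul_cancel_right]

theorem stmt2_general (n : ℕ) (G N : Subgroup (Equiv.Perm (Fin n)))
    (hNG : N ≤ G)
    (τ : Equiv.Perm (Fin n)) (hτG : τ ∈ G)
    (hcyc : τ.IsCycle) (hsupp : τ.support = Finset.univ)
    (hab : ∀ a ∈ G, ∀ b ∈ G, a * b * a⁻¹ * b⁻¹ ∈ N)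
    (htriv : ∀ x ∈ N, x ∈ Subgroup.zpowers τ → x = 1) :
    (∀ g ∈ G, ∃ x ∈ N, g * τ * g⁻¹ = x * τ) ∧
    (∀ x ∈ N, ∃ g ∈ G, g * τ * g⁻¹ = x * τ) := by
  refine ⟨fun g hg ↦ ⟨⁅g, τ⁆, hab g hg τ hτG, by group⟩, fun x hx ↦ ?_⟩
  obtain ⟨y, hy, hconj⟩ := N.exists_mem_conj_eq_mul_of_commute_eq_one
    (fun y hy ↦ hab y (hNG hy) τ hτG)
    (fun y hy hcomm ↦ htriv y hy (hcyc.mem_zpowers_of_commute_of_support_eq_univ hsupp hcomm)) hx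
  exact ⟨y, hNG hy, hconj⟩

/-- If moreover `N ∩ ⟨τ⟩ = 1`, the conjugacy class of the `n`-cycle `τ` in `G`
equals the full coset `Nτ`. -/
theorem stmt2 (n : ℕ) (G N : Subgroup (Equiv.Perm (Fin n)))
    (hNG : N ≤ G)
    (hnormal : ∀ g ∈ G, ∀ x ∈ N, g * x * g⁻¹ ∈ N)
    (τ : Equiv.Perm (Fin n)) (hτG : τ ∈ G)
    (hcyc : τ.IsCycle) (hsupp : τ.support = Finset.univ)
    (hgen : ∀ g ∈ G, ∃ x ∈ N, ∃ k : ℤ, g = x * τ ^ k)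
    (hab : ∀ a ∈ G, ∀ b ∈ G, a * b * a⁻¹ * b⁻¹ ∈ N)
    (htriv : ∀ x ∈ N, x ∈ Subgroup.zpowers τ → x = 1) :
    (∀ g ∈ G, ∃ x ∈ N, g * τ * g⁻¹ = x * τ) ∧
    (∀ x ∈ N, ∃ g ∈ G, g * τ * g⁻¹ = x * τ) :=
  stmt2_general n G N hNG τ hτG hcyc hsupp hab htriv
end

section
/- Let G ≤ S_n be a transitive permutation group generated by a transitive normal subgroup N and a transitive cyclic subgroup ⟨τ⟩ (so τ is an n-cycle). Then N ∩ ⟨τ⟩ has order at least 2; in particular the extension G = N⟨τ⟩ cannot be split with N ∩ ⟨τ⟩ = {1}. -/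
/-!
If `N ∩ ⟨τ⟩ = 1`, then, as the centralizer of the `n`-cycle `τ` is `⟨τ⟩`, no nontrivial element
of `N` commutes with `τ`, so `y ↦ y⁻¹ τ y τ⁻¹` is injective, hence bijective, on the finite group
`N`. Every element of the coset `Nτ` is then conjugate to `τ`, hence fixed-point free; but
transitivity of `N` gives `x ∈ N` with `x (τ w) = w`, so that `xτ` fixes `w`.
-/

theorem Equiv.Perm.IsCycle.mem_zpowers_of_commute {α : Type*} [Fintype α] [DecidableEq α]
    {c g : Equiv.Perm α} (hc : c.IsCycle) (hsupp : c.support = Finset.univ)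
    (hg : Commute g c) : g ∈ Subgroup.zpowers c := by
  obtain ⟨hg', hmem⟩ := hc.commute_iff.mp hg
  rwa [Equiv.Perm.ofSubtype_subtypePerm hg' (fun x _ => hsupp ▸ Finset.mem_univ x)] at hmem

theorem Subgroup.exists_conj_eq_mul_of_commute_eq_one {G : Type*} [Group G] {N : Subgroup G}
    [Finite N] {t : G} (ht : ∀ y ∈ N, t * y * t⁻¹ ∈ N)
    (hcent : ∀ z ∈ N, Commute z t → z = 1) {x : G} (hx : x ∈ N) :
    ∃ y ∈ N, y⁻¹ * t * y = x * t := by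
  let f : N → N := fun y => ⟨y⁻¹ * (t * y * t⁻¹), N.mul_mem (N.inv_mem y.2) (ht y y.2)⟩
  have hf : Function.Injective f := by
    intro y₁ y₂ h
    have hconj : (y₁ : G)⁻¹ * t * y₁ = (y₂ : G)⁻¹ * t * y₂ := by
      simpa [f, mul_assoc] using congrArg (fun z : N => (z : G) * t) h
    have hcomm : Commute ((y₂ : G) * (y₁ : G)⁻¹) t := by
      calc (y₂ : G) * (y₁ : G)⁻¹ * t = y₂ * ((y₁ : G)⁻¹ * t * y₁) * (y₁ : G)⁻¹ := by group
        _ = y₂ * ((y₂ : G)⁻¹ * t * y₂) * (y₁ : G)⁻¹ := by rw [hconj]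
        _ = t * (y₂ * (y₁ : G)⁻¹) := by group
    exact (Subtype.ext (mul_inv_eq_one.mp (hcent _ (N.mul_mem y₂.2 (N.inv_mem y₁.2)) hcomm))).symm
  obtain ⟨y, hy⟩ := Finite.surjective_of_injective hf ⟨x, hx⟩
  refine ⟨y, y.2, ?_⟩
  rw [← show (y : G)⁻¹ * (t * y * t⁻¹) = x from congrArg Subtype.val hy]
  group

theorem stmt3_general (n : ℕ) (G N : Subgroup (Equiv.Perm (Fin n)))
    (hnormal : ∀ g ∈ G, ∀ x ∈ N, g * x * g⁻¹ ∈ N)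
    (hNtrans : ∀ x y : Fin n, ∃ g ∈ N, g x = y)
    (τ : Equiv.Perm (Fin n)) (hτG : τ ∈ G)
    (hcyc : τ.IsCycle) (hsupp : τ.support = Finset.univ) :
    ∃ x : Equiv.Perm (Fin n), x ∈ N ∧ x ∈ Subgroup.zpowers τ ∧ x ≠ 1 := by
  by_contra! htriv
  obtain ⟨w, -⟩ := hcyc.nonempty_support
  obtain ⟨x, hxN, hxw⟩ := hNtrans (τ w) w
  obtain ⟨y, -, hy⟩ := N.exists_conj_eq_mul_of_commute_eq_one (hnormal τ hτG)
    (fun z hz hzτ => htriv z hz (hcyc.mem_zpowers_of_commute hsupp hzτ)) hxN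
  have hfix : τ (y w) = y w := by
    have : (y⁻¹ * τ * y) w = w := by rw [hy]; exact hxw
    rwa [Equiv.Perm.mul_apply, Equiv.Perm.mul_apply, Equiv.Perm.inv_eq_iff_eq] at this
  exact Equiv.Perm.mem_support.mp (hsupp ▸ Finset.mem_univ (y w)) hfix

/-- Theorem (group), part (i): if `G ≤ S_n` is generated by a transitive normal subgroup `N`
and an `n`-cycle `τ`, then `N ∩ ⟨τ⟩` has order at least 2, i.e. contains a nontrivial element;
in particular the extension cannot split with trivial intersection. -/
theorem stmt3 (n : ℕ) (G N : Subgroup (Equiv.Perm (Fin n)))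
    (hNG : N ≤ G)
    (hnormal : ∀ g ∈ G, ∀ x ∈ N, g * x * g⁻¹ ∈ N)
    (hNtrans : ∀ x y : Fin n, ∃ g ∈ N, g x = y)
    (τ : Equiv.Perm (Fin n)) (hτG : τ ∈ G)
    (hcyc : τ.IsCycle) (hsupp : τ.support = Finset.univ)
    (hgen : ∀ g ∈ G, ∃ x ∈ N, ∃ k : ℤ, g = x * τ ^ k) :
    ∃ x : Equiv.Perm (Fin n), x ∈ N ∧ x ∈ Subgroup.zpowers τ ∧ x ≠ 1 :=
  stmt3_general n G N hnormal hNtrans τ hτG hcyc hsupp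
end

section
/- Let p be a prime, r ≥ 1, and d ≥ 2 with (p, r, d) such that r · gcd(d, p^r − 1) ≥ (p^{rd} − 1) / (2(p^r − 1)). Then d = 2, r = 1, and p ≤ 3. -/
/-!
Put `q = p ^ r` and `g = gcd(d, q - 1)`. Cancelling `q - 1` turns the hypothesis into
`1 + q + ⋯ + q ^ (d - 1) ≤ 2 r g`, while `2 r ≤ 2 ^ r ≤ q`. Since `g ≤ q - 1`, a term
`q ^ 2` on the left is already too large, so `d = 2` and `q + 1 ≤ 2 r g` with `g ∣ 2`.
Then `g = 1` would give `q < 2 r`, so `g = 2`, which makes `p` odd; now `3 ^ r ≤ q < 4 r`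
forces `r = 1` and `p ≤ 3`.
-/

open Finset

lemma Nat.geom_sum_le_of_pow_sub_one_le {q m : ℕ} (hq : 1 < q) {n : ℕ}
    (h : q ^ n - 1 ≤ (q - 1) * m) : ∑ i ∈ range n, q ^ i ≤ m := by
  refine Nat.le_of_mul_le_mul_right ?_ (Nat.sub_pos_of_lt hq)
  rw [geom_sum_mul_of_one_le hq.le, mul_comm m]
  exact h

lemma Nat.four_mul_le_three_pow {r : ℕ} (hr : 2 ≤ r) : 4 * r ≤ 3 ^ r := by
  obtain ⟨k, rfl⟩ : ∃ k, r = k + 1 := ⟨r - 1, by omega⟩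
  have := Nat.mul_le_pow (by decide : 3 ≠ 1) k
  rw [pow_succ]
  omega

lemma Nat.le_two_of_geom_sum_le {q r d : ℕ} (hrq : 2 * r ≤ q)
    (h : ∑ i ∈ range d, q ^ i ≤ 2 * r * (q - 1)) : d ≤ 2 := by
  by_contra! hd
  have h3 : ∑ i ∈ range 3, q ^ i ≤ ∑ i ∈ range d, q ^ i :=
    sum_le_sum_of_subset (range_subset_range.2 hd)
  simp only [sum_range_succ, sum_range_zero, pow_zero, pow_one] at h3
  have : 2 * r * (q - 1) ≤ q * (q - 1) := Nat.mul_le_mul_right _ hrq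
  have : q * (q - 1) ≤ q * q := Nat.mul_le_mul_left _ (Nat.sub_le q 1)
  nlinarith

/-- If `p` is prime, `r ≥ 1`, `d ≥ 2` and `r·gcd(d, p^r − 1) ≥ (p^{rd} − 1)/(2(p^r − 1))`
(stated multiplied out to avoid division), then `d = 2`, `r = 1` and `p ≤ 3`. -/
theorem stmt8 (p r d : ℕ) (hp : p.Prime) (hr : 1 ≤ r) (hd : 2 ≤ d)
    (h : p ^ (r * d) - 1 ≤ 2 * (p ^ r - 1) * (r * Nat.gcd d (p ^ r - 1))) :
    d = 2 ∧ r = 1 ∧ p ≤ 3 := by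
  set q := p ^ r with hq
  set g := d.gcd (q - 1)
  have hg_dvd : g ∣ d := Nat.gcd_dvd_left d (q - 1)
  have hg_dvd' : g ∣ q - 1 := Nat.gcd_dvd_right d (q - 1)
  clear_value q g
  rw [pow_mul, ← hq] at h
  have hq1 : 1 < q := hq ▸ Nat.one_lt_pow (by omega) hp.one_lt
  have hrq : 2 * r ≤ q :=
    hq ▸ (Nat.mul_le_pow (by decide) r).trans (Nat.pow_le_pow_left hp.two_le r)
  have hsum : ∑ i ∈ range d, q ^ i ≤ 2 * r * g :=
    Nat.geom_sum_le_of_pow_sub_one_le hq1 (h.trans_eq (by ring))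
  obtain rfl : d = 2 := le_antisymm (Nat.le_two_of_geom_sum_le hrq
    (hsum.trans (Nat.mul_le_mul_left _ (Nat.le_of_dvd (by omega) hg_dvd')))) hd
  have hq2 : q + 1 ≤ 2 * r * g := by simpa [sum_range_succ, add_comm] using hsum
  obtain rfl : g = 2 := by
    rcases (Nat.dvd_prime Nat.prime_two).1 hg_dvd with rfl | rfl
    · omega
    · rfl
  have hp3 : 3 ≤ p := by
    rcases hp.eq_two_or_odd with rfl | hodd
    · have : 2 ∣ q := hq ▸ dvd_pow_self 2 (by omega)
      omega
    · have := hp.two_le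
      omega
  obtain rfl : r = 1 := by
    by_contra hr1
    have := Nat.four_mul_le_three_pow (r := r) (by omega)
    have : 3 ^ r ≤ q := hq ▸ Nat.pow_le_pow_left hp3 r
    omega
  refine ⟨rfl, rfl, ?_⟩
  rw [pow_one] at hq
  omega
end

section
/- Let K be a finite group with a normal elementary abelian p-subgroup P such that K/P is abelian of exponent dividing p − 1 and the extension splits, i.e., K = P ⋊ U for some abelian complement U. If Z(K) = 1, then K' = P. -/
open scoped commutatorElement

/-- Let `K = P ⋊ U` with `P` a normal elementary abelian `p`-subgroup and `U` an abelian
complement of exponent dividing `p − 1`. If `Z(K)` is trivial, then `K' = P`. -/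
theorem stmt10 {K : Type*} [Group K] [Fintype K] (p : ℕ) (hp : p.Prime)
    (P U : Subgroup K) [P.Normal]
    (hPab : ∀ a ∈ P, ∀ b ∈ P, a * b = b * a)
    (hPexp : ∀ x ∈ P, x ^ p = 1)
    (hUab : ∀ a ∈ U, ∀ b ∈ U, a * b = b * a)
    (hUexp : ∀ x ∈ U, x ^ (p - 1) = 1)
    (hdisj : P ⊓ U = ⊥)
    (hgen : ∀ g : K, ∃ a ∈ P, ∃ v ∈ U, g = a * v)
    (hZ : Subgroup.center K = ⊥) :
    commutator K = P := by
  classical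
  haveI : Fintype U := Fintype.ofFinite U
  have hPnorm : P.Normal := inferInstance
  apply le_antisymm
  · -- commutator K ≤ P since K/P is abelian
    rw [commutator_def, Subgroup.commutator_le]
    intro g _ h _
    obtain ⟨a, ha, v, hv, rfl⟩ := hgen g
    obtain ⟨b, hb, w, hw, rfl⟩ := hgen h
    refine (QuotientGroup.eq_one_iff _).mp ?_
    set π := QuotientGroup.mk' P with hπ
    have hπa : π a = 1 := (QuotientGroup.eq_one_iff a).mpr ha
    have hπb : π b = 1 := (QuotientGroup.eq_one_iff b).mpr hb
    have hc : π ⁅a * v, b * w⁆ = ⁅π v, π w⁆ := by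
      rw [map_commutatorElement, map_mul, map_mul, hπa, hπb, one_mul, one_mul]
    rw [show (QuotientGroup.mk ⁅a * v, b * w⁆ : K ⧸ P) = π ⁅a * v, b * w⁆ from rfl, hc,
      commutatorElement_eq_one_iff_commute]
    exact Commute.map (hUab v hv w hw) π
  · -- P ≤ commutator K
    intro a ha
    set n := Fintype.card U with hn
    have hp2 := hp.two_le
    -- p does not divide |U|
    have hcop : ¬ p ∣ n := by
      intro hdvd
      haveI : Fact p.Prime := ⟨hp⟩
      obtain ⟨u, hu⟩ := exists_prime_orderOf_dvd_card p hdvd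
      have h1 : u ^ (p - 1) = 1 := by
        have := hUexp (u : K) u.2
        ext
        simpa using this
      have h2 := orderOf_dvd_of_pow_eq_one h1
      rw [hu] at h2
      have := Nat.le_of_dvd (by omega) h2
      omega
    letI : CommGroup ↥P :=
      { (inferInstance : Group ↥P) with
        mul_comm := fun x y => Subtype.ext (hPab x x.2 y y.2) }
    -- the norm element
    set f : ↥U → ↥P := fun v => ⟨(v : K) * a * (v : K)⁻¹, hPnorm.conj_mem a ha v⟩ with hf
    set N' : ↥P := ∏ v : U, f v with hN'
    set N : K := (N' : K) with hNdef
    have hNP : N ∈ P := N'.2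
    -- N is U-invariant
    have hNU : ∀ u : U, (u : K) * N * (u : K)⁻¹ = N := by
      intro u
      let cu : ↥P →* ↥P :=
        { toFun := fun x => ⟨(u : K) * x * (u : K)⁻¹, hPnorm.conj_mem x x.2 u⟩
          map_one' := by ext; simp
          map_mul' := by
            intro x y
            ext
            show (u : K) * (↑x * ↑y) * (u : K)⁻¹
              = ((u : K) * ↑x * (u : K)⁻¹) * ((u : K) * ↑y * (u : K)⁻¹)
            group }
      have hco : ∀ x : ↥P, (u : K) * (x : K) * (u : K)⁻¹ = ((cu x : ↥P) : K) := fun _ => rfl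
      have key : cu N' = N' := by
        rw [hN', map_prod]
        have hcf : ∀ v : U, cu (f v) = f (u * v) := by
          intro v
          ext
          show (u : K) * ((v : K) * a * (v : K)⁻¹) * (u : K)⁻¹
            = ((u : K) * (v : K)) * a * ((u : K) * (v : K))⁻¹
          group
        rw [Finset.prod_congr rfl fun v _ => hcf v]
        exact Equiv.prod_comp (Equiv.mulLeft u) f
      rw [hNdef, hco, key]
    -- N is central, hence 1
    have hNZ : N ∈ Subgroup.center K := by
      rw [Subgroup.mem_center_iff]
      intro g
      obtain ⟨b, hb, w, hw, rfl⟩ := hgen g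
      have hbN : b * N = N * b := hPab b hb N hNP
      have hwN : w * N = N * w := by
        have h := hNU ⟨w, hw⟩
        simp only [Subgroup.coe_mk] at h
        calc w * N = (w * N * w⁻¹) * w := by group
        _ = N * w := by rw [h]
      rw [mul_assoc, hwN, ← mul_assoc, hbN, mul_assoc]
    have hN1 : N = 1 := by rwa [hZ, Subgroup.mem_bot] at hNZ
    -- pass to K ⧸ commutator K
    set π := QuotientGroup.mk' (commutator K) with hπ
    have hcomm : ∀ x y : K, Commute (π x) (π y) := by
      intro x y
      rw [← commutatorElement_eq_one_iff_commute, ← map_commutatorElement,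
        QuotientGroup.mk'_apply, QuotientGroup.eq_one_iff]
      exact Subgroup.commutator_mem_commutator (Subgroup.mem_top x) (Subgroup.mem_top y)
    letI : CommGroup (K ⧸ commutator K) :=
      { (inferInstance : Group (K ⧸ commutator K)) with
        mul_comm := fun x y => by
          induction x using QuotientGroup.induction_on with | _ x =>
          induction y using QuotientGroup.induction_on with | _ y =>
          exact hcomm x y }
    have hπN : π N = (π a) ^ n := by
      have hre : π N = (π.comp P.subtype) N' := rfl
      rw [hre, hN', map_prod]
      have hv : ∀ v : U, (π.comp P.subtype) (f v) = π a := by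
        intro v
        show π ((v : K) * a * (v : K)⁻¹) = π a
        rw [map_mul, map_mul, map_inv, (hcomm (v : K) a).eq, mul_assoc, mul_inv_cancel,
          mul_one]
      rw [Finset.prod_congr rfl fun v _ => hv v, Finset.prod_const, Finset.card_univ, hn]
    have h1 : (π a) ^ n = 1 := by rw [← hπN, hN1, map_one]
    have h2 : (π a) ^ p = 1 := by rw [← map_pow, hPexp a ha, map_one]
    have hord : orderOf (π a) ∣ Nat.gcd n p :=
      Nat.dvd_gcd (orderOf_dvd_of_pow_eq_one h1) (orderOf_dvd_of_pow_eq_one h2)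
    have hgcd : Nat.gcd n p = 1 :=
      Nat.Coprime.gcd_eq_one (Nat.coprime_comm.mpr (hp.coprime_iff_not_dvd.mpr hcop))
    have hone : π a = 1 := orderOf_eq_one_iff.mp (Nat.eq_one_of_dvd_one (hgcd ▸ hord))
    rwa [QuotientGroup.mk'_apply, QuotientGroup.eq_one_iff] at hone
end

section
/- Let n ≥ 4 be even and let G ≤ C₂ ≀ C_{n/2} ≤ S_n be a subgroup of the imprimitive wreath product (with blocks {1,2},{3,4},...,{n−1,n} and cyclic block action) such that G contains a transposition swapping the two points of one block and G acts transitively on the blocks with full cyclic image C_{n/2}. Then G = C₂ ≀ C_{n/2}. -/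
/-- Let `W ≤ S_n` be the imprimitive wreath product `C₂ ≀ C_{n/2}` (all permutations whose
induced action on the blocks `{2k, 2k+1}` is a rotation). If `G ≤ W` contains a transposition
swapping the two points of one block and surjects onto the cyclic block-rotation group
`C_{n/2}`, then `G = W`. -/
theorem stmt13 (n : ℕ) (hn : 4 ≤ n) (hev : Even n)
    (W G : Subgroup (Equiv.Perm (Fin n)))
    (hW : ∀ g : Equiv.Perm (Fin n), g ∈ W ↔
        ∃ k : ℕ, ∀ i : Fin n, (g i : ℕ) / 2 = ((i : ℕ) / 2 + k) % (n / 2))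
    (hGW : G ≤ W)
    (htransp : ∃ a b : Fin n, a ≠ b ∧ (a : ℕ) / 2 = (b : ℕ) / 2 ∧ Equiv.swap a b ∈ G)
    (hfull : ∀ k : ℕ, ∃ g ∈ G, ∀ i : Fin n, (g i : ℕ) / 2 = ((i : ℕ) / 2 + k) % (n / 2)) :
    G = W := by
  have hmn : n / 2 * 2 = n := Nat.div_mul_cancel hev.two_dvd
  -- two distinct elements of the same block determine the block's swap uniquely
  have pair : ∀ x y u v : Fin n, x ≠ y → (x : ℕ) / 2 = (y : ℕ) / 2 → u ≠ v →
      (u : ℕ) / 2 = (v : ℕ) / 2 → (x : ℕ) / 2 = (u : ℕ) / 2 →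
      Equiv.swap x y = Equiv.swap u v := by
    intro x y u v hxy h1 huv h2 h3
    have hxy' : (x : ℕ) ≠ (y : ℕ) := fun h => hxy (Fin.ext h)
    have huv' : (u : ℕ) ≠ (v : ℕ) := fun h => huv (Fin.ext h)
    have hcases : ((x : ℕ) = u ∧ (y : ℕ) = v) ∨ ((x : ℕ) = v ∧ (y : ℕ) = u) := by omega
    rcases hcases with ⟨h4, h5⟩ | ⟨h4, h5⟩
    · rw [Fin.ext h4, Fin.ext h5]
    · rw [Fin.ext h4, Fin.ext h5, Equiv.swap_comm]
  obtain ⟨a₀, b₀, hab, hblk, hsw⟩ := htransp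
  -- G contains every block swap
  have hswaps : ∀ a b : Fin n, a ≠ b → (a : ℕ) / 2 = (b : ℕ) / 2 → Equiv.swap a b ∈ G := by
    intro a b hne hbl
    obtain ⟨g, hgG, hg⟩ := hfull (n / 2 - (a₀ : ℕ) / 2 + (a : ℕ) / 2)
    have ha0 : (a₀ : ℕ) < n := a₀.isLt
    have ha : (a : ℕ) < n := a.isLt
    have hsum : (a₀ : ℕ) / 2 + (n / 2 - (a₀ : ℕ) / 2 + (a : ℕ) / 2) = n / 2 + (a : ℕ) / 2 := by
      omega
    have hmod : ((a₀ : ℕ) / 2 + (n / 2 - (a₀ : ℕ) / 2 + (a : ℕ) / 2)) % (n / 2) = (a : ℕ) / 2 := by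
      rw [hsum, Nat.add_mod_left, Nat.mod_eq_of_lt (by omega)]
    have hga : (g a₀ : ℕ) / 2 = (a : ℕ) / 2 := by rw [hg a₀, hmod]
    have hgb : (g b₀ : ℕ) / 2 = (a : ℕ) / 2 := by rw [hg b₀, ← hblk, hmod]
    have hne' : g a₀ ≠ g b₀ := fun h => hab (g.injective h)
    have key : Equiv.swap (g a₀) (g b₀) = Equiv.swap a b :=
      pair _ _ _ _ hne' (hga.trans hgb.symm) hne hbl (hga.trans rfl)
    have hconj : g * Equiv.swap a₀ b₀ * g⁻¹ = Equiv.swap (g a₀) (g b₀) := by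
      rw [Equiv.swap_apply_apply]
    rw [← key, ← hconj]
    exact G.mul_mem (G.mul_mem hgG hsw) (G.inv_mem hgG)
  -- every block-preserving permutation is in G
  have hker : ∀ N : ℕ, ∀ h : Equiv.Perm (Fin n), h.support.card ≤ N →
      (∀ i : Fin n, (h i : ℕ) / 2 = (i : ℕ) / 2) → h ∈ G := by
    intro N
    induction N with
    | zero =>
      intro h hc _
      have : h = 1 := by
        rw [← Equiv.Perm.support_eq_empty_iff]
        exact Finset.card_eq_zero.mp (Nat.le_zero.mp hc)
      rw [this]; exact G.one_mem
    | succ N ih =>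
      intro h hc hcond
      by_cases h1 : h = 1
      · rw [h1]; exact G.one_mem
      · obtain ⟨i, hi⟩ : ∃ i, h i ≠ i := by
          by_contra hno
          push_neg at hno
          exact h1 (Equiv.ext hno)
        set s := Equiv.swap i (h i) with hs
        have hsG : s ∈ G := hswaps _ _ (Ne.symm hi) ((hcond i).symm)
        have hinv : h (h i) = i := by
          have e1 := hcond (h i)
          have e2 := hcond i
          have hne2 : h (h i) ≠ h i := fun e => hi (h.injective e)
          have hne2' : (h (h i) : ℕ) ≠ ((h i : Fin n) : ℕ) := fun e => hne2 (Fin.ext e)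
          have hi' : ((h i : Fin n) : ℕ) ≠ (i : ℕ) := fun e => hi (Fin.ext e)
          exact Fin.ext (by omega)
        have hcond' : ∀ j : Fin n, ((s * h) j : ℕ) / 2 = (j : ℕ) / 2 := by
          intro j
          have hj := hcond j
          simp only [Equiv.Perm.mul_apply]
          rcases eq_or_ne (h j) i with e | e
          · rw [e]; simp only [hs, Equiv.swap_apply_left]
            rw [hcond i, ← e]; exact hj
          · rcases eq_or_ne (h j) (h i) with e2 | e2
            · rw [e2]; simp only [hs, Equiv.swap_apply_right]
              rw [← hcond i, ← e2]; exact hj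
            · rw [hs, Equiv.swap_apply_of_ne_of_ne e e2]; exact hj
        have hsub : (s * h).support ⊆ h.support \ {i, h i} := by
          intro x hx
          rw [Equiv.Perm.mem_support, Equiv.Perm.mul_apply] at hx
          rcases eq_or_ne x i with rfl | hxi
          · exact absurd (by simp [hs]) hx
          · rcases eq_or_ne x (h i) with rfl | hxhi
            · exact absurd (by rw [hinv]; simp [hs]) hx
            · have hhx1 : h x ≠ i := by
                intro e; exact hxhi (h.injective (by rw [e, hinv]))
              have hhx2 : h x ≠ h i := fun e => hxi (h.injective e)
              rw [hs, Equiv.swap_apply_of_ne_of_ne hhx1 hhx2] at hx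
              simp only [Finset.mem_sdiff, Equiv.Perm.mem_support, Finset.mem_insert,
                Finset.mem_singleton]
              exact ⟨hx, by push_neg; exact ⟨hxi, hxhi⟩⟩
        have hcard : (s * h).support.card ≤ N := by
          have h1' : (s * h).support.card ≤ (h.support \ {i, h i}).card :=
            Finset.card_le_card hsub
          have h2' : (h.support \ {i, h i}).card < h.support.card := by
            apply Finset.card_lt_card
            constructor
            · exact Finset.sdiff_subset
            · intro hsub2
              have : i ∈ h.support \ {i, h i} := hsub2 (Equiv.Perm.mem_support.mpr hi)
              simp at this
          omega
        have hG' := ih (s * h) hcard hcond'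
        have hrw : h = s * (s * h) := by
          rw [← mul_assoc, hs, Equiv.swap_mul_self, one_mul]
        rw [hrw]
        exact G.mul_mem hsG hG'
  -- conclude
  apply le_antisymm hGW
  intro g hg
  obtain ⟨k, hk⟩ := (hW g).mp hg
  obtain ⟨g₀, hg₀G, hg₀⟩ := hfull k
  have hzero : ∀ i : Fin n, ((g * g₀⁻¹) i : ℕ) / 2 = (i : ℕ) / 2 := by
    intro i
    have h1 := hk (g₀⁻¹ i)
    have h2 := hg₀ (g₀⁻¹ i)
    rw [show g₀ (g₀⁻¹ i) = i from g₀.apply_symm_apply i] at h2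
    simp only [Equiv.Perm.mul_apply]
    rw [h1, ← h2]
  have hmem := hker _ _ le_rfl hzero
  have hrw : g = (g * g₀⁻¹) * g₀ := by group
  rw [hrw]
  exact G.mul_mem hmem hg₀G
end
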